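/- Correctness of the prefix-doubling Check procedure: for every natural number t, D_t(n,m) ≤ t if and only if d(A,B) ≤ t; moreover, if d(A,B) ≤ t then D_t(n,m) = d(A,B) (as elements of ℕ∞). Hence, if the DP restricted to the diagonal band of half-width t returns a value σ with σ ≤ t, then σ is the true edit distance, and otherwise the true edit distance exceeds t. -/

import Mathlib

/-- Restored from older Mathlib (removed since): costs of the edit operations. -/
structure Levenshtein.Cost (α β δ : Type*) where
  delete : α → δ
  insert : β → δ
  substitute : α → β → δ

/-- Restored from older Mathlib: the unit cost. -/
def Levenshtein.defaultCost {α : Type*} [DecidableEq α] : Levenshtein.Cost α α ℕ where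
  delete _ := 1
  insert _ := 1
  substitute a b := if a = b then 0 else 1

/-- Restored from older Mathlib: the Levenshtein distance, given by its characterizing
recursion (`levenshtein_nil_nil`, `levenshtein_nil_cons`, `levenshtein_cons_nil`,
`levenshtein_cons_cons`). -/
def levenshtein {α β δ : Type*} [AddZeroClass δ] [Min δ] (C : Levenshtein.Cost α β δ) :
    List α → List β → δ
  | [], [] => 0
  | [], y :: ys => C.insert y + levenshtein C [] ys
  | x :: xs, [] => C.delete x + levenshtein C xs []
  | x :: xs, y :: ys =>
      min (C.delete x + levenshtein C xs (y :: ys))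
        (min (C.insert y + levenshtein C (x :: xs) ys) (C.substitute x y + levenshtein C xs ys))

/-- The unit-cost Levenshtein edit distance. -/
def editDist {α : Type*} [DecidableEq α] (A B : List α) : ℕ :=
  levenshtein Levenshtein.defaultCost A B

/-- The band-restricted DP table `D_t` with values in `ℕ∞`: entries outside the diagonal band
`|i - j| ≤ t` are `⊤`, `D_t(0,0) = 0`, and otherwise `D_t(i,j)` is the minimum of the
applicable terms (diagonal with substitution cost, vertical `+1`, horizontal `+1`). -/
noncomputable def bandDP {α : Type*} [DecidableEq α] (A B : List α) (t : ℕ) : ℕ → ℕ → ℕ∞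
  | i, j =>
    if (t : ℤ) < |(i : ℤ) - (j : ℤ)| then ⊤
    else
      match i, j with
      | 0, 0 => 0
      | i + 1, 0 => bandDP A B t i 0 + 1
      | 0, j + 1 => bandDP A B t 0 j + 1
      | i + 1, j + 1 =>
          min (bandDP A B t i j + (if A[i]? = B[j]? then (0 : ℕ∞) else 1))
            (min (bandDP A B t i (j + 1) + 1) (bandDP A B t (i + 1) j + 1))
  termination_by i j => i + j

/-!
Let `P(i, j)` be the edit distance between the prefixes `A[:i]` and `B[:j]`. It satisfies the
unrestricted DP recursion, and `|i - j| ≤ P(i, j)`. Hence a band entry with `|i - j| > t` is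
`⊤` exactly where `P` is already `≥ t + 1`, and by induction along the recursion of `D_t`,
`min D_t(i, j) (t + 1) = min P(i, j) (t + 1)`, because capping at `t + 1` commutes with `+ c`
and `min`. Both claims only depend on values capped at `t + 1`.

`P` is computed on the reversed prefixes, where extending a prefix is a `cons` and the head
recursion of `levenshtein` applies; this needs `d(A, B) = d(reverse A, reverse B)`, which
follows from reversing edit scripts.
-/

theorem min_add_eq_min_add_of_min_eq {M : Type*} [AddCommMonoid M] [LinearOrder M]
    [IsOrderedAddMonoid M] [CanonicallyOrderedAdd M] {a b T : M} (h : min a T = min b T) (c : M) :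
    min (a + c) T = min (b + c) T := by
  have cap : ∀ x : M, min (x + c) T = min (min x T + c) T := fun x => by
    rw [← min_add_add_right, min_assoc, min_eq_right le_self_add]
  rw [cap a, cap b, h]

section

variable {M : Type*} [LinearOrder M] {a b a' b' T : M}

theorem min_min_eq_min_min_of_min_eq (h : min a T = min b T) (h' : min a' T = min b' T) :
    min (min a a') T = min (min b b') T := by
  rw [inf_inf_distrib_right a, inf_inf_distrib_right b]
  exact congrArg₂ min h h'

theorem eq_of_min_eq_min (h : min a T = min b T) (hb : b < T) : a = b := by
  rw [min_eq_left hb.le] at h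
  rcases min_choice a T with ha | ha
  · rwa [ha] at h
  · rw [ha] at h
    subst h
    exact absurd hb (lt_irrefl _)

theorem le_iff_le_of_min_eq_min {c : M} (h : min a T = min b T) (hc : c < T) :
    a ≤ c ↔ b ≤ c := by
  have key : ∀ x : M, x ≤ c ↔ min x T ≤ c := fun x => by simp [not_le.mpr hc]
  rw [key a, key b, h]

end

section EditDist

variable {α : Type*} [DecidableEq α]

@[simp] theorem editDist_nil_nil : editDist ([] : List α) [] = 0 := by
  rw [editDist, levenshtein]

@[simp] theorem editDist_nil_cons (b : α) (B : List α) :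
    editDist [] (b :: B) = editDist [] B + 1 := by
  rw [editDist, editDist, levenshtein, add_comm]; rfl

@[simp] theorem editDist_cons_nil (a : α) (A : List α) :
    editDist (a :: A) [] = editDist A [] + 1 := by
  rw [editDist, editDist, levenshtein, add_comm]; rfl

theorem editDist_cons_cons (a b : α) (A B : List α) :
    editDist (a :: A) (b :: B) =
      min (editDist A (b :: B) + 1)
        (min (editDist (a :: A) B + 1) (editDist A B + if a = b then 0 else 1)) := by
  simp only [editDist, levenshtein, Levenshtein.defaultCost]
  omega

inductive EditScript : List α → List α → ℕ → Prop
  | nil : EditScript [] [] 0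
  | sub (a b : α) {A B : List α} {k : ℕ} :
      EditScript A B k → EditScript (a :: A) (b :: B) (k + if a = b then 0 else 1)
  | del (a : α) {A B : List α} {k : ℕ} : EditScript A B k → EditScript (a :: A) B (k + 1)
  | ins (b : α) {A B : List α} {k : ℕ} : EditScript A B k → EditScript A (b :: B) (k + 1)

namespace EditScript

variable {A B A' B' : List α} {k k' : ℕ}

theorem append (h : EditScript A B k) (h' : EditScript A' B' k') :
    EditScript (A ++ A') (B ++ B') (k + k') := by
  induction h with
  | nil => simpa using h'
  | sub a b _ ih => rw [List.cons_append, List.cons_append, add_right_comm]; exact .sub a b ih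
  | del a _ ih => rw [List.cons_append, add_right_comm]; exact .del a ih
  | ins b _ ih => rw [List.cons_append, add_right_comm]; exact .ins b ih

theorem reverse (h : EditScript A B k) : EditScript A.reverse B.reverse k := by
  induction h with
  | nil => exact .nil
  | sub a b _ ih => simpa using ih.append (.sub a b .nil)
  | del a _ ih => simpa using ih.append (.del a .nil)
  | ins b _ ih => simpa using ih.append (.ins b .nil)

theorem abs_length_sub_le (h : EditScript A B k) : |(A.length : ℤ) - B.length| ≤ k := by
  induction h with
  | nil => simp
  | sub a b _ ih =>
    simp only [List.length_cons, abs_sub_le_iff] at ih ⊢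
    push_cast
    split_ifs <;> omega
  | del a _ ih | ins b _ ih =>
    simp only [List.length_cons, abs_sub_le_iff] at ih ⊢
    push_cast
    omega

end EditScript

theorem editDist_le_of_editScript {A B : List α} {k : ℕ} (h : EditScript A B k) :
    editDist A B ≤ k := by
  induction h with
  | nil => simp
  | sub a b _ ih => rw [editDist_cons_cons]; omega
  | @del a A B _ _ ih =>
    cases B with
    | nil => simp only [editDist_cons_nil]; omega
    | cons b B => rw [editDist_cons_cons]; omega
  | @ins b A B _ _ ih =>
    cases A with
    | nil => simp only [editDist_nil_cons]; omega
    | cons a A => rw [editDist_cons_cons]; omega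

theorem editScript_editDist (A B : List α) : EditScript A B (editDist A B) := by
  induction A, B using levenshtein.induct with
  | case1 => rw [editDist_nil_nil]; exact .nil
  | case2 b B ih => rw [editDist_nil_cons]; exact .ins b ih
  | case3 a A ih => rw [editDist_cons_nil]; exact .del a ih
  | case4 a A b B ihDel ihIns ihSub =>
    rw [editDist_cons_cons]
    rcases min_choice (editDist A (b :: B) + 1)
        (min (editDist (a :: A) B + 1) (editDist A B + if a = b then 0 else 1)) with h | h <;>
      rw [h]
    · exact .del a ihDel
    · rcases min_choice (editDist (a :: A) B + 1) (editDist A B + if a = b then 0 else 1)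
        with h | h <;> rw [h]
      · exact .ins b ihIns
      · exact .sub a b ihSub

theorem editDist_reverse (A B : List α) : editDist A.reverse B.reverse = editDist A B :=
  le_antisymm (editDist_le_of_editScript (editScript_editDist A B).reverse) <| by
    simpa using editDist_le_of_editScript (editScript_editDist A.reverse B.reverse).reverse

theorem abs_length_sub_le_editDist (A B : List α) :
    |(A.length : ℤ) - B.length| ≤ editDist A B :=
  (editScript_editDist A B).abs_length_sub_le

end EditDist

theorem List.reverse_take_add_one {α : Type*} {l : List α} {i : ℕ} (h : i < l.length) :
    (l.take (i + 1)).reverse = l[i] :: (l.take i).reverse := by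
  rw [List.take_add_one, List.getElem?_eq_getElem h]
  simp

section BandDP

variable {α : Type*} [DecidableEq α] (A B : List α)

def prefixDist (i j : ℕ) : ℕ := editDist (A.take i).reverse (B.take j).reverse

theorem prefixDist_length : prefixDist A B A.length B.length = editDist A B := by
  simp [prefixDist, editDist_reverse]

theorem prefixDist_zero_zero : prefixDist A B 0 0 = 0 := by
  simp [prefixDist]

variable {A B}

theorem prefixDist_succ_zero {i : ℕ} (hi : i < A.length) :
    prefixDist A B (i + 1) 0 = prefixDist A B i 0 + 1 := by
  simp [prefixDist, List.reverse_take_add_one hi]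

theorem prefixDist_zero_succ {j : ℕ} (hj : j < B.length) :
    prefixDist A B 0 (j + 1) = prefixDist A B 0 j + 1 := by
  simp [prefixDist, List.reverse_take_add_one hj]

theorem prefixDist_succ_succ {i j : ℕ} (hi : i < A.length) (hj : j < B.length) :
    (prefixDist A B (i + 1) (j + 1) : ℕ∞) =
      min (prefixDist A B i j + if A[i]? = B[j]? then (0 : ℕ∞) else 1)
        (min (prefixDist A B i (j + 1) + 1) (prefixDist A B (i + 1) j + 1)) := by
  simp only [prefixDist, List.reverse_take_add_one hi, List.reverse_take_add_one hj,
    editDist_cons_cons, List.getElem?_eq_getElem hi, List.getElem?_eq_getElem hj, Option.some_inj]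
  split_ifs <;> simp only [Nat.mono_cast.map_min] <;> push_cast <;> ac_rfl

theorem abs_sub_le_prefixDist {i j : ℕ} (hi : i ≤ A.length) (hj : j ≤ B.length) :
    |(i : ℤ) - j| ≤ prefixDist A B i j := by
  simpa [prefixDist, hi, hj] using abs_length_sub_le_editDist (A.take i).reverse (B.take j).reverse

theorem bandDP_of_lt {t i j : ℕ} (h : (t : ℤ) < |(i : ℤ) - j|) : bandDP A B t i j = ⊤ := by
  rw [bandDP.eq_def]
  exact if_pos h

theorem min_bandDP_eq_min_prefixDist (t : ℕ) {i j : ℕ} (hi : i ≤ A.length) (hj : j ≤ B.length) :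
    min (bandDP A B t i j) (t + 1) = min (prefixDist A B i j : ℕ∞) (t + 1) := by
  induction i, j using bandDP.induct (t := t) with
  | case1 i j hout =>
    have hfar : t + 1 ≤ prefixDist A B i j := by
      have := abs_sub_le_prefixDist hi hj
      omega
    rw [bandDP_of_lt hout, min_eq_right le_top, min_eq_right (by exact_mod_cast hfar)]
  | case2 => simp [bandDP, prefixDist_zero_zero]
  | case3 i hin ih =>
    rw [bandDP, if_neg hin, prefixDist_succ_zero hi, Nat.cast_succ]
    exact min_add_eq_min_add_of_min_eq (ih (by omega) hj) 1
  | case4 j hin ih =>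
    rw [bandDP, if_neg hin, prefixDist_zero_succ hj, Nat.cast_succ]
    exact min_add_eq_min_add_of_min_eq (ih hi (by omega)) 1
  | case5 i j hin ihSub ihDel ihIns =>
    rw [bandDP, if_neg hin, prefixDist_succ_succ hi hj]
    exact min_min_eq_min_min_of_min_eq
      (min_add_eq_min_add_of_min_eq (ihSub (by omega) (by omega)) _)
      (min_min_eq_min_min_of_min_eq (min_add_eq_min_add_of_min_eq (ihDel (by omega) hj) 1)
        (min_add_eq_min_add_of_min_eq (ihIns hi (by omega)) 1))

end BandDP

/-- Correctness of the prefix-doubling `Check` procedure: the band-restricted DP value at the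
sink is at most `t` iff the true edit distance is at most `t`, and in that case the DP value
equals the true edit distance. -/
theorem bandDP_check_correct {α : Type*} [DecidableEq α] (A B : List α) (t : ℕ) :
    (bandDP A B t A.length B.length ≤ (t : ℕ∞) ↔ editDist A B ≤ t) ∧
    (editDist A B ≤ t → bandDP A B t A.length B.length = (editDist A B : ℕ∞)) := by
  have hcap : min (bandDP A B t A.length B.length) (t + 1) = min (editDist A B : ℕ∞) (t + 1) := by
    rw [min_bandDP_eq_min_prefixDist t le_rfl le_rfl, prefixDist_length]
  have ht : (t : ℕ∞) < t + 1 := ENat.natCast_lt_succ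
  refine ⟨?_, fun h => eq_of_min_eq_min hcap ((Nat.cast_le.mpr h).trans_lt ht)⟩
  rw [le_iff_le_of_min_eq_min hcap ht, Nat.cast_le]
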